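/- arXiv:1709.03893 — 6 statements merged into one kernel-verified Lean document; each statement's English description precedes it below -/
import Mathlib

section
/- Let H be a separable complex Hilbert space, let p ≥ 1, and let x, y : Fin p × ℤ → H form a pair of dual Riesz bases for H. Let M be a p×p complex matrix with det M ≠ 0, and define z_{(j,n)} = ∑_{k=0}^{p−1} M_{j,k} x_{(k,n)} and w_{(j,n)} = ∑_{k=0}^{p−1} conj((M⁻¹)_{k,j}) y_{(k,n)} for j ∈ Fin p, n ∈ ℤ. Then z is a Riesz basis for H, and z and w form a pair of dual Riesz bases; in particular, for every f ∈ H the family ((j,n) ↦ ⟨f, w_{(j,n)}⟩ z_{(j,n)}) has sum f (unconditional convergence in H). -/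
noncomputable section
open scoped Classical

local notation "⟪" f ", " g "⟫" => @inner ℂ _ _ g f

/-- A family `x : ι → H` is a Riesz basis for `H` if it is the image of a Hilbert
(orthonormal) basis of `H` under a continuous linear equivalence of `H`. -/
def IsRieszBasis {H : Type*} [NormedAddCommGroup H] [InnerProductSpace ℂ H]
    {ι : Type*} (x : ι → H) : Prop :=
  ∃ (e : HilbertBasis ι ℂ H) (T : H ≃L[ℂ] H), ∀ i, x i = T (e i)

/-- Families `x, y : ι → H` form a pair of dual Riesz bases: both are Riesz bases,
they are biorthogonal, and `∑ᵢ ⟨f, yᵢ⟩ xᵢ = f` for every `f` (inner product linear in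
the first argument, conjugate-linear in the second). -/
def IsDualRieszBasisPair {H : Type*} [NormedAddCommGroup H] [InnerProductSpace ℂ H]
    {ι : Type*} (x y : ι → H) : Prop :=
  IsRieszBasis x ∧ IsRieszBasis y ∧
    (∀ i j, ⟪x i, y j⟫ = if i = j then (1 : ℂ) else 0) ∧
    ∀ f : H, HasSum (fun i => ⟪f, y i⟫ • x i) f

/-
Write `x = T ∘ e` with `e` a Hilbert basis. The matrix `M` acts on each fibre
`span {e (k, n) | k}` separately, giving a bounded operator `B` on `H` (a finite sum of
products of row isometries `ℓ²(ℤ) → H` and their adjoints), invertible with inverse the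
block operator of `M⁻¹`, and `z = T B ∘ e`. A Riesz basis `R ∘ e` always has the dual
`(R⁻¹)* ∘ e`, and biorthogonality forces the given dual `y` to be `(T⁻¹)* ∘ e`. Since
`(B⁻¹)*` is the block operator of `(M⁻¹)ᴴ`, `w = (T⁻¹)* (B⁻¹)* ∘ e = ((T B)⁻¹)* ∘ e`.
-/

open scoped Matrix lp
open ContinuousLinearMap (adjoint)

namespace ContinuousLinearEquiv

variable {𝕜 E F G : Type*} [RCLike 𝕜] [NormedAddCommGroup E] [InnerProductSpace 𝕜 E]
  [CompleteSpace E] [NormedAddCommGroup F] [InnerProductSpace 𝕜 F] [CompleteSpace F]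
  [NormedAddCommGroup G] [InnerProductSpace 𝕜 G] [CompleteSpace G]

def adjoint (R : E ≃L[𝕜] F) : F ≃L[𝕜] E :=
  equivOfInverse' (ContinuousLinearMap.adjoint (R : E →L[𝕜] F))
    (ContinuousLinearMap.adjoint (R.symm : F →L[𝕜] E))
    (by rw [← ContinuousLinearMap.adjoint_comp, coe_symm_comp_coe, ContinuousLinearMap.adjoint_id])
    (by rw [← ContinuousLinearMap.adjoint_comp, coe_comp_coe_symm, ContinuousLinearMap.adjoint_id])

theorem inner_adjoint_apply (R : E ≃L[𝕜] F) (u : F) (v : E) :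
    inner 𝕜 (R.adjoint u) v = inner 𝕜 u (R v) :=
  ContinuousLinearMap.adjoint_inner_left (R : E →L[𝕜] F) v u

theorem adjoint_trans_apply (A : E ≃L[𝕜] F) (B : F ≃L[𝕜] G) (v : G) :
    (A.trans B).adjoint v = A.adjoint (B.adjoint v) := by
  change ContinuousLinearMap.adjoint ((B : F →L[𝕜] G) ∘L (A : E →L[𝕜] F)) v = _
  rw [ContinuousLinearMap.adjoint_comp]
  rfl

end ContinuousLinearEquiv

namespace HilbertBasis

section Riesz

variable {H : Type*} [NormedAddCommGroup H] [InnerProductSpace ℂ H] [CompleteSpace H]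
  {ι : Type*}

theorem isDualRieszBasisPair_map (e : HilbertBasis ι ℂ H) (R : H ≃L[ℂ] H) :
    IsDualRieszBasisPair (fun i => R (e i)) (fun i => R.symm.adjoint (e i)) := by
  refine ⟨⟨e, R, fun _ => rfl⟩, ⟨e, R.symm.adjoint, fun _ => rfl⟩, fun i j => ?_, fun f => ?_⟩
  · rw [R.symm.inner_adjoint_apply, R.symm_apply_apply, orthonormal_iff_ite.mp e.orthonormal]
    simp only [eq_comm]
  · have hf := (e.hasSum_repr (R.symm f)).mapL (R : H →L[ℂ] H)
    simp only [ContinuousLinearMap.map_smul, ContinuousLinearEquiv.coe_coe,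
      R.apply_symm_apply, e.repr_apply_apply] at hf
    simpa only [R.symm.inner_adjoint_apply] using hf

theorem eq_symm_adjoint_of_biorthogonal (e : HilbertBasis ι ℂ H) (T : H ≃L[ℂ] H) {y : ι → H}
    (hb : ∀ i j, ⟪T (e i), y j⟫ = if i = j then (1 : ℂ) else 0) (j : ι) :
    y j = T.symm.adjoint (e j) := by
  have hT : ∀ u, inner ℂ (y j) (T u) = inner ℂ (e j) u := fun u => by
    have hu := (e.hasSum_repr u).mapL ((innerSL ℂ (y j)).comp (T : H →L[ℂ] H))
    simp only [ContinuousLinearMap.map_smul, ContinuousLinearMap.comp_apply, innerSL_apply_apply,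
      ContinuousLinearEquiv.coe_coe, smul_eq_mul] at hu
    refine hu.unique ?_
    simp only [hb, mul_ite, mul_one, mul_zero, ← e.repr_apply_apply]
    convert hasSum_single j fun i (hi : i ≠ j) => if_neg hi
    rw [if_pos rfl]
  refine ext_inner_right ℂ fun (v : H) => ?_
  rw [T.symm.inner_adjoint_apply, ← hT, T.apply_symm_apply]

end Riesz

variable {𝕜 H : Type*} [RCLike 𝕜] [NormedAddCommGroup H] [InnerProductSpace 𝕜 H]

theorem continuousLinearMap_ext {ι F : Type*} [TopologicalSpace F] [AddCommMonoid F] [Module 𝕜 F]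
    [T2Space F] (e : HilbertBasis ι 𝕜 H) {A B : H →L[𝕜] F} (h : ∀ i, A (e i) = B (e i)) :
    A = B :=
  ContinuousLinearMap.ext_on (Submodule.dense_iff_topologicalClosure_eq_top.mpr e.dense_span)
    (Set.forall_mem_range.mpr h)

variable [CompleteSpace H] {ι κ : Type*} (e : HilbertBasis (ι × κ) 𝕜 H)

def row (i : ι) : ℓ²(κ, 𝕜) →L[𝕜] H :=
  (e.orthonormal.comp (fun n => (i, n)) fun _ _ h => (Prod.ext_iff.mp h).2).orthogonalFamily
    |>.linearIsometry.toContinuousLinearMap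

theorem row_single (i : ι) (n : κ) (c : 𝕜) : e.row i (lp.single 2 n c) = c • e (i, n) := by
  rw [row, LinearIsometry.coe_toContinuousLinearMap, OrthogonalFamily.linearIsometry_apply_single,
    LinearIsometry.toSpanSingleton_apply]
  rfl

theorem adjoint_row_apply_apply (i : ι) (u : H) (n : κ) :
    adjoint (e.row i) u n = inner 𝕜 (e (i, n)) u := by
  have h := lp.inner_single_left (G := fun _ : κ => 𝕜) (𝕜 := 𝕜) n (1 : 𝕜) (adjoint (e.row i) u)
  rw [ContinuousLinearMap.adjoint_inner_right, row_single, one_smul, RCLike.inner_apply, map_one,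
    mul_one] at h
  exact h.symm

theorem adjoint_row_apply_basis (i j : ι) (n : κ) :
    adjoint (e.row i) (e (j, n)) = if j = i then lp.single 2 n 1 else 0 := by
  ext m
  rw [adjoint_row_apply_apply, orthonormal_iff_ite.mp e.orthonormal]
  split_ifs with h h' <;> simp_all [lp.single_apply, Prod.ext_iff]

theorem row_comp_adjoint_row_apply_basis (i j j' : ι) (n : κ) :
    (e.row i ∘L adjoint (e.row j)) (e (j', n)) = if j' = j then e (i, n) else 0 := by
  rw [ContinuousLinearMap.comp_apply, adjoint_row_apply_basis]
  split_ifs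
  · rw [row_single, one_smul]
  · exact map_zero _

variable [Fintype ι]

def blockOp (N : Matrix ι ι 𝕜) : H →L[𝕜] H :=
  ∑ j, ∑ k, N j k • (e.row k ∘L adjoint (e.row j))

theorem blockOp_apply (N : Matrix ι ι 𝕜) (j : ι) (n : κ) :
    e.blockOp N (e (j, n)) = ∑ k, N j k • e (k, n) := by
  simp only [blockOp, sum_apply, smul_apply, row_comp_adjoint_row_apply_basis]
  simp

theorem blockOp_comp (N N' : Matrix ι ι 𝕜) : e.blockOp N ∘L e.blockOp N' = e.blockOp (N' * N) := by
  refine e.continuousLinearMap_ext fun ⟨j, n⟩ => ?_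
  simp only [ContinuousLinearMap.comp_apply, blockOp_apply, map_sum, map_smul, Finset.smul_sum,
    smul_smul, Matrix.mul_apply, Finset.sum_smul]
  exact Finset.sum_comm

theorem adjoint_blockOp (N : Matrix ι ι 𝕜) : adjoint (e.blockOp N) = e.blockOp Nᴴ := by
  simp only [blockOp, map_sum, LinearIsometryEquiv.map_smulₛₗ, ContinuousLinearMap.adjoint_comp,
    ContinuousLinearMap.adjoint_adjoint]
  rw [Finset.sum_comm]
  simp [Matrix.conjTranspose_apply]

variable [DecidableEq ι]

theorem blockOp_one : e.blockOp 1 = ContinuousLinearMap.id 𝕜 H :=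
  e.continuousLinearMap_ext fun ⟨j, n⟩ => by simp [blockOp_apply, Matrix.one_apply]

def blockEquiv (N : Matrix ι ι 𝕜) (hN : IsUnit N.det) : H ≃L[𝕜] H :=
  .equivOfInverse' (e.blockOp N) (e.blockOp N⁻¹)
    (by rw [blockOp_comp, N.nonsing_inv_mul hN, blockOp_one])
    (by rw [blockOp_comp, N.mul_nonsing_inv hN, blockOp_one])

theorem blockEquiv_apply (N : Matrix ι ι 𝕜) (hN : IsUnit N.det) (v : H) :
    e.blockEquiv N hN v = e.blockOp N v := rfl

theorem blockEquiv_symm_adjoint_apply (N : Matrix ι ι 𝕜) (hN : IsUnit N.det) (j : ι) (n : κ) :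
    (e.blockEquiv N hN).symm.adjoint (e (j, n)) = ∑ k, starRingEnd 𝕜 (N⁻¹ k j) • e (k, n) := by
  change adjoint (e.blockOp N⁻¹) (e (j, n)) = _
  rw [adjoint_blockOp, blockOp_apply]
  rfl

end HilbertBasis

theorem stmt0_general {H : Type*} [NormedAddCommGroup H] [InnerProductSpace ℂ H]
    [CompleteSpace H]
    {p : ℕ} (x y : Fin p × ℤ → H)
    (hxy : IsDualRieszBasisPair x y)
    (M : Matrix (Fin p) (Fin p) ℂ) (hM : M.det ≠ 0)
    (z w : Fin p × ℤ → H)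
    (hz : ∀ j n, z (j, n) = ∑ k, M j k • x (k, n))
    (hw : ∀ j n, w (j, n) = ∑ k, (starRingEnd ℂ) (M⁻¹ k j) • y (k, n)) :
    IsRieszBasis z ∧ IsDualRieszBasisPair z w := by
  obtain ⟨⟨e, T, hxT⟩, -, hxy, -⟩ := hxy
  set B := e.blockEquiv M hM.isUnit
  have hzR : z = fun i => (B.trans T) (e i) := funext fun ⟨j, n⟩ => by
    rw [hz, B.trans_apply, e.blockEquiv_apply, e.blockOp_apply, map_sum]
    simp only [map_smul, hxT]
  have hyT (i) : y i = T.symm.adjoint (e i) :=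
    e.eq_symm_adjoint_of_biorthogonal T (by simpa only [hxT] using hxy) i
  have hwR : w = fun i => (B.trans T).symm.adjoint (e i) := funext fun ⟨j, n⟩ => by
    change _ = (T.symm.trans B.symm).adjoint _
    rw [hw, ContinuousLinearEquiv.adjoint_trans_apply, e.blockEquiv_symm_adjoint_apply, map_sum]
    simp only [map_smul, hyT]
  have hpair := e.isDualRieszBasisPair_map (B.trans T)
  rw [hzR, hwR]
  exact ⟨hpair.1, hpair⟩

theorem stmt0 {H : Type*} [NormedAddCommGroup H] [InnerProductSpace ℂ H]
    [CompleteSpace H] [TopologicalSpace.SeparableSpace H]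
    {p : ℕ} (hp : 1 ≤ p) (x y : Fin p × ℤ → H)
    (hxy : IsDualRieszBasisPair x y)
    (M : Matrix (Fin p) (Fin p) ℂ) (hM : M.det ≠ 0)
    (z w : Fin p × ℤ → H)
    (hz : ∀ j n, z (j, n) = ∑ k, M j k • x (k, n))
    (hw : ∀ j n, w (j, n) = ∑ k, (starRingEnd ℂ) (M⁻¹ k j) • y (k, n)) :
    IsRieszBasis z ∧ IsDualRieszBasisPair z w :=
  stmt0_general x y hxy M hM z w hz hw
end
end

section
/- Let H be a separable complex Hilbert space, let p ≥ 1, let x : Fin p × ℤ → H be any family of vectors, and let M be a p×p complex matrix with det M ≠ 0. Define z_{(j,n)} = ∑_{k=0}^{p−1} M_{j,k} x_{(k,n)}. If z is a Riesz basis for H, then x is a Riesz basis for H. -/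
noncomputable section
open scoped Classical

local notation "⟪" f ", " g "⟫" => @inner ℂ _ _ g f

/-!
Inverting `M` gives `x (k, n) = ∑ j, M⁻¹ k j • z (j, n)`, so it suffices that mixing a Riesz basis
within each block `{(j, n) : j}` by one invertible matrix yields a Riesz basis. Transporting `H` to
`ℓ²(ℤ, ℂ^p)` along the Hilbert basis underlying `z`, this mixing is the operator applying the
constant matrix `(M⁻¹)ᵀ` in every fibre: it is bounded, with inverse of the same form.
-/

open Matrix

section lpConst

variable {𝕜 ι E F : Type*} [NontriviallyNormedField 𝕜]
  [NormedAddCommGroup E] [NormedSpace 𝕜 E] [NormedAddCommGroup F] [NormedSpace 𝕜 F]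
  (p : ENNReal) [Fact (1 ≤ p)]

def lp.constMapCLM (T : E →L[𝕜] F) : lp (fun _ : ι => E) p →L[𝕜] lp (fun _ : ι => F) p :=
  lp.mapCLM p (fun _ => T) (norm_nonneg T) fun _ => le_rfl

@[simp]
theorem lp.constMapCLM_apply_coe (T : E →L[𝕜] F) (c : lp (fun _ : ι => E) p) (n : ι) :
    lp.constMapCLM p T c n = T (c n) := rfl

def lp.constMapCLE (T : E ≃L[𝕜] F) : lp (fun _ : ι => E) p ≃L[𝕜] lp (fun _ : ι => F) p :=
  .equivOfInverse (lp.constMapCLM p (T : E →L[𝕜] F)) (lp.constMapCLM p (T.symm : F →L[𝕜] E))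
    (fun c => by ext; simp) (fun c => by ext; simp)

@[simp]
theorem lp.constMapCLE_single [DecidableEq ι] (T : E ≃L[𝕜] F) (n : ι) (a : E) :
    lp.constMapCLE p T (lp.single p n a) = lp.single p n (T a) := by
  ext m
  by_cases h : m = n <;> simp [lp.constMapCLE, lp.single_apply, h]

end lpConst

section lpSingle

variable {𝕜 κ ι E : Type*} [RCLike 𝕜] [NormedAddCommGroup E] [InnerProductSpace 𝕜 E]

theorem HilbertBasis.orthonormal_lpSingle (b : HilbertBasis κ 𝕜 E) :
    Orthonormal 𝕜 fun i : κ × ι => lp.single (E := fun _ : ι => E) 2 i.2 (b i.1) := by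
  rw [orthonormal_iff_ite]
  rintro ⟨k, n⟩ ⟨l, m⟩
  rw [lp.inner_single_left, lp.single_apply]
  by_cases h : n = m
  · subst h; simpa using orthonormal_iff_ite.1 b.orthonormal k l
  · simp [h]

theorem HilbertBasis.orthogonal_span_lpSingle_eq_bot (b : HilbertBasis κ 𝕜 E) :
    (Submodule.span 𝕜 (Set.range fun i : κ × ι =>
      lp.single (E := fun _ : ι => E) 2 i.2 (b i.1)))ᗮ = ⊥ := by
  refine Submodule.eq_bot_iff _ |>.2 fun v hv => ?_
  rw [Submodule.mem_orthogonal'] at hv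
  refine lp.ext (funext fun n => b.repr.injective (lp.ext (funext fun k => ?_)))
  have := hv _ (Submodule.subset_span ⟨(k, n), rfl⟩)
  simpa [b.repr_apply_apply, lp.inner_single_right, inner_eq_zero_symm] using this

def HilbertBasis.lpSingle [CompleteSpace E] (b : HilbertBasis κ 𝕜 E) (ι : Type*) :
    HilbertBasis (κ × ι) 𝕜 (lp (fun _ : ι => E) 2) :=
  .mkOfOrthogonalEqBot b.orthonormal_lpSingle b.orthogonal_span_lpSingle_eq_bot

@[simp]
theorem HilbertBasis.lpSingle_apply [CompleteSpace E] (b : HilbertBasis κ 𝕜 E) (k : κ) (n : ι) :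
    b.lpSingle ι (k, n) = lp.single 2 n (b k) := by
  simp [HilbertBasis.lpSingle]

end lpSingle

theorem Matrix.toEuclideanCLM_transpose_single {𝕜 κ : Type*} [RCLike 𝕜] [Fintype κ]
    [DecidableEq κ] (N : Matrix κ κ 𝕜) (k : κ) :
    toEuclideanCLM (𝕜 := 𝕜) Nᵀ (EuclideanSpace.single k 1) =
      ∑ j, N k j • EuclideanSpace.single j 1 := by
  ext i
  simp [Pi.single_apply]

theorem HilbertBasis.exists_equiv_apply_eq_sum_smul {𝕜 κ ι H : Type*} [RCLike 𝕜]
    [Fintype κ] [DecidableEq κ] [NormedAddCommGroup H] [InnerProductSpace 𝕜 H]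
    (e : HilbertBasis (κ × ι) 𝕜 H) {N : Matrix κ κ 𝕜} (hN : IsUnit N) :
    ∃ A : H ≃L[𝕜] H, ∀ k n, A (e (k, n)) = ∑ j, N k j • e (j, n) := by
  let f := (EuclideanSpace.basisFun κ 𝕜).toHilbertBasis.lpSingle ι
  let U : H ≃ₗᵢ[𝕜] _ := e.repr.trans f.repr.symm
  have hU : ∀ i, U.symm (f i) = e i := fun i => by
    simp [U, HilbertBasis.repr_self, HilbertBasis.repr_symm_single]
  have hf : ∀ j n, f (j, n) = lp.single 2 n (EuclideanSpace.single j 1) := by simp [f]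
  have hNT : IsUnit (toEuclideanCLM (𝕜 := 𝕜) Nᵀ) := ((isUnit_transpose N).2 hN).map _
  let L := ContinuousLinearEquiv.unitsEquiv 𝕜 _ hNT.unit
  refine ⟨U.toContinuousLinearEquiv.trans
    ((lp.constMapCLE 2 L).trans U.symm.toContinuousLinearEquiv), fun k n => ?_⟩
  calc U.symm (lp.constMapCLE 2 L (U (e (k, n))))
      = U.symm (lp.single 2 n (∑ j, N k j • EuclideanSpace.single j 1)) := by
        rw [← hU, U.apply_symm_apply, hf, lp.constMapCLE_single]
        simp [L, toEuclideanCLM_transpose_single]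
    _ = ∑ j, N k j • e (j, n) := by
        rw [← lp.singleAddMonoidHom_apply, map_sum]
        simp only [lp.singleAddMonoidHom_apply, lp.single_smul, ← hf, map_sum, map_smul, hU]

theorem Matrix.sum_smul_sum_smul {R V l m n : Type*} [Semiring R] [AddCommMonoid V] [Module R V]
    [Fintype m] [Fintype n] (A : Matrix l m R) (B : Matrix m n R) (v : n → V) (i : l) :
    ∑ j, A i j • ∑ k, B j k • v k = ∑ k, (A * B) i k • v k := by
  simp only [Finset.smul_sum, smul_smul, mul_apply, Finset.sum_smul]
  exact Finset.sum_comm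

theorem IsRieszBasis.sum_smul {κ ι H : Type*} [Fintype κ] [DecidableEq κ] [NormedAddCommGroup H]
    [InnerProductSpace ℂ H] {z : κ × ι → H} (hz : IsRieszBasis z) {N : Matrix κ κ ℂ}
    (hN : IsUnit N) : IsRieszBasis fun i : κ × ι => ∑ j, N i.1 j • z (j, i.2) := by
  obtain ⟨e, T, hT⟩ := hz
  obtain ⟨A, hA⟩ := e.exists_equiv_apply_eq_sum_smul hN
  exact ⟨e, A.trans T, fun ⟨k, n⟩ => by simp [hT, hA]⟩

theorem stmt2_general {H : Type*} [NormedAddCommGroup H] [InnerProductSpace ℂ H]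
    {p : ℕ} (x : Fin p × ℤ → H)
    (M : Matrix (Fin p) (Fin p) ℂ) (hM : M.det ≠ 0)
    (z : Fin p × ℤ → H)
    (hz : ∀ j n, z (j, n) = ∑ k, M j k • x (k, n))
    (hzR : IsRieszBasis z) :
    IsRieszBasis x := by
  have hdet : IsUnit M.det := hM.isUnit
  have hx : x = fun i => ∑ j, M⁻¹ i.1 j • z (j, i.2) := by
    funext ⟨k, n⟩
    simp [hz, sum_smul_sum_smul, M.nonsing_inv_mul hdet, one_apply]
  rw [hx]
  exact hzR.sum_smul (M.isUnit_nonsing_inv_iff.2 ((M.isUnit_iff_isUnit_det).2 hdet))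

theorem stmt2 {H : Type*} [NormedAddCommGroup H] [InnerProductSpace ℂ H]
    [CompleteSpace H] [TopologicalSpace.SeparableSpace H]
    {p : ℕ} (hp : 1 ≤ p) (x : Fin p × ℤ → H)
    (M : Matrix (Fin p) (Fin p) ℂ) (hM : M.det ≠ 0)
    (z : Fin p × ℤ → H)
    (hz : ∀ j n, z (j, n) = ∑ k, M j k • x (k, n))
    (hzR : IsRieszBasis z) :
    IsRieszBasis x :=
  stmt2_general x M hM z hz hzR
end
end

section
/- Let H be a separable complex Hilbert space, let q > p ≥ 1, and let x, y : Fin p × ℤ → H form a pair of dual Riesz bases for H. Let M be a q×p complex matrix with rank M = p, and define z_{(j,n)} = ∑_{k=0}^{p−1} M_{j,k} x_{(k,n)} for j ∈ Fin q, n ∈ ℤ. Then z is a frame for H: there exist constants 0 < A ≤ B such that for every f ∈ H, A·‖f‖² ≤ ∑_{j∈Fin q} ∑_{n∈ℤ} |⟨f, z_{(j,n)}⟩|² ≤ B·‖f‖². -/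
noncomputable section
open scoped Classical

local notation "⟪" f ", " g "⟫" => @inner ℂ _ _ g f

/-!
With `cₙ = (⟨x₍ₖ,ₙ₎, f⟩)ₖ ∈ ℂᵖ` one has `|⟨f, z₍ⱼ,ₙ₎⟩| = |(M cₙ)ⱼ|`. Since `M` has rank `p` it is
injective, so `‖M cₙ‖²` is comparable to `‖cₙ‖²` uniformly in `n`. Summing over `n`,
`∑ₙ ‖cₙ‖² = ∑ᵢ |⟨f, xᵢ⟩|² = ‖T* f‖²` by Parseval for the Hilbert basis `e` with `xᵢ = T eᵢ`,
and `‖T* f‖` is comparable to `‖f‖` because `T*` is invertible.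
-/

open Matrix

section Summation

variable {ι κ : Type*}

theorem HasSum.sum_fintype_fst {α : Type*} [AddCommMonoid α] [TopologicalSpace α]
    [ContinuousAdd α] [T3Space α] [Fintype κ] {F : κ × ι → α} {s : α} (h : HasSum F s) :
    HasSum (fun n => ∑ k, F (k, n)) s :=
  ((Equiv.prodComm ι κ).hasSum_iff.2 h).prod_fiberwise fun _ => hasSum_fintype _

theorem HasSum.exists_hasSum_of_le_mul_of_mul_le {G W : ι → ℝ} {s a b : ℝ} (hG : HasSum G s)
    (hW : ∀ n, 0 ≤ W n) (hlow : ∀ n, a * G n ≤ W n) (hup : ∀ n, W n ≤ b * G n) :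
    ∃ t, HasSum W t ∧ a * s ≤ t ∧ t ≤ b * s := by
  have hWsum : Summable W := .of_nonneg_of_le hW hup (hG.summable.mul_left b)
  exact ⟨_, hWsum.hasSum, hasSum_le hlow (hG.mul_left a) hWsum.hasSum,
    hasSum_le hup hWsum.hasSum (hG.mul_left b)⟩

theorem summable_and_sum_tsum_eq_of_hasSum_sum [Fintype κ] {F : κ → ι → ℝ}
    (hF : ∀ j n, 0 ≤ F j n) {t : ℝ} (h : HasSum (fun n => ∑ j, F j n) t) :
    (∀ j, Summable (F j)) ∧ ∑ j, ∑' n, F j n = t := by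
  have hsum : ∀ j, Summable (F j) := fun j =>
    .of_nonneg_of_le (hF j) (fun n => Finset.single_le_sum (fun j _ => hF j n)
      (Finset.mem_univ j)) h.summable
  refine ⟨hsum, ?_⟩
  rw [← Summable.tsum_finsetSum fun j _ => hsum j, h.tsum_eq]

end Summation

theorem HilbertBasis.hasSum_norm_repr_sq {𝕜 ι E : Type*} [RCLike 𝕜] [NormedAddCommGroup E]
    [InnerProductSpace 𝕜 E] (e : HilbertBasis ι 𝕜 E) (g : E) :
    HasSum (fun i => ‖e.repr g i‖ ^ 2) (‖g‖ ^ 2) := by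
  have h := lp.hasSum_norm (p := 2) (by norm_num) (e.repr g)
  simpa only [ENNReal.toReal_ofNat, Real.rpow_two, LinearIsometryEquiv.norm_map] using h

theorem ContinuousLinearMap.exists_pos_mul_norm_le_of_leftInverse {𝕜 E F : Type*}
    [NontriviallyNormedField 𝕜] [NormedAddCommGroup E] [NormedAddCommGroup F]
    [NormedSpace 𝕜 E] [NormedSpace 𝕜 F] (S : E →L[𝕜] F) (R : F →L[𝕜] E)
    (h : Function.LeftInverse R S) : ∃ c > 0, ∀ g, c * ‖g‖ ≤ ‖S g‖ :=
  antilipschitzWith_iff_exists_mul_le_norm.1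
    ⟨‖R‖₊, S.antilipschitz_of_bound fun g => by
      simpa only [h g, coe_nnnorm] using R.le_opNorm (S g)⟩

theorem IsRieszBasis.exists_frame_bounds {H ι : Type*} [NormedAddCommGroup H]
    [InnerProductSpace ℂ H] [CompleteSpace H] {x : ι → H} (hx : IsRieszBasis x) :
    ∃ A B : ℝ, 0 < A ∧ ∀ f : H, ∃ s, HasSum (fun i => ‖⟪f, x i⟫‖ ^ 2) s ∧
      A * ‖f‖ ^ 2 ≤ s ∧ s ≤ B * ‖f‖ ^ 2 := by
  obtain ⟨e, T, hT⟩ := hx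
  set S := ContinuousLinearMap.adjoint (T : H →L[ℂ] H)
  have hinner : ∀ f i, ⟪f, x i⟫ = e.repr (S f) i := fun f i => by
    rw [hT, e.repr_apply_apply, ContinuousLinearMap.adjoint_inner_right]; rfl
  have hleft : Function.LeftInverse (ContinuousLinearMap.adjoint (T.symm : H →L[ℂ] H)) S :=
    fun g => by
      rw [← ContinuousLinearMap.comp_apply, ← ContinuousLinearMap.adjoint_comp,
        T.coe_comp_coe_symm, ContinuousLinearMap.adjoint_id, ContinuousLinearMap.id_apply]
  obtain ⟨c, hc, hcS⟩ := S.exists_pos_mul_norm_le_of_leftInverse _ hleft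
  refine ⟨c ^ 2, ‖S‖ ^ 2, by positivity, fun f => ⟨‖S f‖ ^ 2, ?_, ?_, ?_⟩⟩
  · simpa only [hinner] using e.hasSum_norm_repr_sq (S f)
  · rw [← mul_pow]; exact pow_le_pow_left₀ (by positivity) (hcS f) 2
  · rw [← mul_pow]; exact pow_le_pow_left₀ (norm_nonneg _) (S.le_opNorm f) 2

theorem Matrix.mulVec_injective_of_rank_eq_card {𝕜 m n : Type*} [Field 𝕜] [Fintype m]
    [Fintype n] (M : Matrix m n 𝕜) (hM : M.rank = Fintype.card n) :
    Function.Injective M.mulVec := by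
  change Function.Injective M.mulVecLin
  rw [← LinearMap.ker_eq_bot, ← Submodule.finrank_eq_zero]
  have := LinearMap.finrank_range_add_finrank_ker M.mulVecLin
  rw [← Matrix.rank, hM, Module.finrank_fintype_fun_eq_card] at this
  omega

theorem Matrix.exists_bounds_sum_norm_mulVec_sq {𝕜 m n : Type*} [RCLike 𝕜] [Fintype m]
    [Fintype n] (M : Matrix m n 𝕜) (hM : Function.Injective M.mulVec) :
    ∃ a b : ℝ, 0 < a ∧ 0 ≤ b ∧ ∀ v : n → 𝕜,
      a * ∑ k, ‖v k‖ ^ 2 ≤ ∑ j, ‖(M *ᵥ v) j‖ ^ 2 ∧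
      ∑ j, ‖(M *ᵥ v) j‖ ^ 2 ≤ b * ∑ k, ‖v k‖ ^ 2 := by
  set L : EuclideanSpace 𝕜 n →ₗ[𝕜] EuclideanSpace 𝕜 m := Matrix.toLpLin 2 2 M
  have hL : Function.Injective L := fun v w h =>
    WithLp.ofLp_injective 2 (hM (congrArg WithLp.ofLp h))
  obtain ⟨K, -, hK⟩ := L.exists_antilipschitzWith (LinearMap.ker_eq_bot.2 hL)
  obtain ⟨c, hc, hcL⟩ := antilipschitzWith_iff_exists_mul_le_norm.1 ⟨K, hK⟩
  refine ⟨c ^ 2, ‖LinearMap.toContinuousLinearMap L‖ ^ 2, by positivity, by positivity,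
    fun v => ?_⟩
  have hMv : L (WithLp.toLp 2 v) = WithLp.toLp 2 (M *ᵥ v) := rfl
  rw [← EuclideanSpace.norm_sq_eq (WithLp.toLp 2 v),
    ← EuclideanSpace.norm_sq_eq (WithLp.toLp 2 (M *ᵥ v)), ← hMv, ← mul_pow, ← mul_pow]
  exact ⟨pow_le_pow_left₀ (by positivity) (hcL _) 2,
    pow_le_pow_left₀ (norm_nonneg _) ((LinearMap.toContinuousLinearMap L).le_opNorm _) 2⟩

theorem stmt4_general {H : Type*} [NormedAddCommGroup H] [InnerProductSpace ℂ H]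
    [CompleteSpace H]
    {p q : ℕ} (x y : Fin p × ℤ → H)
    (hxy : IsDualRieszBasisPair x y)
    (M : Matrix (Fin q) (Fin p) ℂ) (hM : M.rank = p)
    (z : Fin q × ℤ → H)
    (hz : ∀ j n, z (j, n) = ∑ k, M j k • x (k, n)) :
    ∃ A B : ℝ, 0 < A ∧ A ≤ B ∧ ∀ f : H,
      (∀ j : Fin q, Summable fun n : ℤ => ‖⟪f, z (j, n)⟫‖ ^ 2) ∧
      A * ‖f‖ ^ 2 ≤ ∑ j : Fin q, ∑' n : ℤ, ‖⟪f, z (j, n)⟫‖ ^ 2 ∧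
      ∑ j : Fin q, ∑' n : ℤ, ‖⟪f, z (j, n)⟫‖ ^ 2 ≤ B * ‖f‖ ^ 2 := by
  obtain ⟨A, B, hA, hx⟩ := hxy.1.exists_frame_bounds
  obtain ⟨a, b, ha, hb, hMbounds⟩ := M.exists_bounds_sum_norm_mulVec_sq
    (M.mulVec_injective_of_rank_eq_card (by rw [hM, Fintype.card_fin]))
  refine ⟨a * A, max (a * A) (b * B), by positivity, le_max_left _ _, fun f => ?_⟩
  obtain ⟨s, hs, hAs, hsB⟩ := hx f
  set c : ℤ → Fin p → ℂ := fun n k => inner ℂ f (x (k, n))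
  have hzx : ∀ j n, ‖⟪f, z (j, n)⟫‖ = ‖(M *ᵥ c n) j‖ := fun j n => by
    rw [norm_inner_symm, hz, inner_sum]
    simp only [inner_smul_right, mulVec, dotProduct, c]
  have hxs : HasSum (fun n => ∑ k, ‖c n k‖ ^ 2) s := by
    simpa only [norm_inner_symm (x _)] using hs.sum_fintype_fst
  obtain ⟨t, ht, hst, hts⟩ := hxs.exists_hasSum_of_le_mul_of_mul_le
    (fun n => by positivity) (fun n => (hMbounds (c n)).1) (fun n => (hMbounds (c n)).2)
  obtain ⟨hsum, htsum⟩ := summable_and_sum_tsum_eq_of_hasSum_sum (fun _ _ => by positivity) ht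
  simp only [hzx]
  refine ⟨hsum, ?_, ?_⟩ <;> rw [htsum]
  · calc a * A * ‖f‖ ^ 2 = a * (A * ‖f‖ ^ 2) := mul_assoc _ _ _
      _ ≤ a * s := by gcongr
      _ ≤ t := hst
  · calc t ≤ b * s := hts
      _ ≤ b * B * ‖f‖ ^ 2 := by rw [mul_assoc]; gcongr
      _ ≤ max (a * A) (b * B) * ‖f‖ ^ 2 := by gcongr; exact le_max_right _ _

theorem stmt4 {H : Type*} [NormedAddCommGroup H] [InnerProductSpace ℂ H]
    [CompleteSpace H] [TopologicalSpace.SeparableSpace H]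
    {p q : ℕ} (hp : 1 ≤ p) (hpq : p < q) (x y : Fin p × ℤ → H)
    (hxy : IsDualRieszBasisPair x y)
    (M : Matrix (Fin q) (Fin p) ℂ) (hM : M.rank = p)
    (z : Fin q × ℤ → H)
    (hz : ∀ j n, z (j, n) = ∑ k, M j k • x (k, n)) :
    ∃ A B : ℝ, 0 < A ∧ A ≤ B ∧ ∀ f : H,
      (∀ j : Fin q, Summable fun n : ℤ => ‖⟪f, z (j, n)⟫‖ ^ 2) ∧
      A * ‖f‖ ^ 2 ≤ ∑ j : Fin q, ∑' n : ℤ, ‖⟪f, z (j, n)⟫‖ ^ 2 ∧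
      ∑ j : Fin q, ∑' n : ℤ, ‖⟪f, z (j, n)⟫‖ ^ 2 ≤ B * ‖f‖ ^ 2 :=
  stmt4_general x y hxy M hM z hz
end
end

section
/- Let H be a separable complex Hilbert space, let q > p ≥ 1, and let x, y : Fin p × ℤ → H form a pair of dual Riesz bases for H. Let M be a q×p complex matrix and N a p×q complex matrix with N·M = I_p. Define z_{(j,n)} = ∑_{k=0}^{p−1} M_{j,k} x_{(k,n)} and z̃_{(j,n)} = ∑_{k=0}^{p−1} conj(N_{k,j}) y_{(k,n)} for j ∈ Fin q, n ∈ ℤ. Then for every f ∈ H, the family ((j,n) ↦ ⟨f, z̃_{(j,n)}⟩ z_{(j,n)}) over Fin q × ℤ has sum f (unconditional convergence in H). -/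
noncomputable section
open scoped Classical

local notation "⟪" f ", " g "⟫" => @inner ℂ _ _ g f

-- auxiliary: fiberwise summability with ℓ² coefficients against a Hilbert basis
lemma aux_summable {H : Type*} [NormedAddCommGroup H] [InnerProductSpace ℂ H]
    [CompleteSpace H] {p : ℕ}
    (e : HilbertBasis (Fin p × ℤ) ℂ H) (a : Fin p × ℤ → ℂ) (ha : Memℓp a 2)
    (k l : Fin p) : Summable (fun n : ℤ => a (k, n) • e (l, n)) := by
  classical
  set A : (Fin p × ℤ) → ℂ := fun i => if i.1 = l then a (k, i.2) else 0 with hAdef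
  have htwo : (0:ℝ) < (2 : ENNReal).toReal := by norm_num
  have hinj : Function.Injective (fun n : ℤ => ((l, n) : Fin p × ℤ)) := by
    intro m n h; simpa using congrArg Prod.snd h
  have hzero : ∀ i ∉ Set.range (fun n : ℤ => ((l, n) : Fin p × ℤ)),
      ‖A i‖ ^ (2 : ENNReal).toReal = 0 := by
    intro i hi
    have : i.1 ≠ l := by
      intro h; exact hi ⟨i.2, by rw [← h]⟩
    simp [hAdef, this, Real.zero_rpow (by norm_num : (2 : ENNReal).toReal ≠ 0)]
  have hfib : Summable fun n : ℤ => ‖a (k, n)‖ ^ (2 : ENNReal).toReal := by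
    have := (ha.summable htwo).comp_injective
      (f := fun i : Fin p × ℤ => ‖a i‖ ^ (2 : ENNReal).toReal)
      (i := fun n : ℤ => ((k, n) : Fin p × ℤ))
      (fun m n h => by simpa using congrArg Prod.snd h)
    exact this
  have hAmem : Memℓp A 2 := by
    apply memℓp_gen
    rw [← hinj.summable_iff hzero]
    refine hfib.congr ?_
    intro n
    simp [hAdef, Function.comp]
  have hHS := e.hasSum_repr_symm ⟨A, hAmem⟩
  have hzero' : ∀ i ∉ Set.range (fun n : ℤ => ((l, n) : Fin p × ℤ)),
      A i • e i = 0 := by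
    intro i hi
    have : i.1 ≠ l := by
      intro h; exact hi ⟨i.2, by rw [← h]⟩
    simp [hAdef, this]
  have : HasSum ((fun i : Fin p × ℤ => A i • e i) ∘ (fun n : ℤ => ((l, n) : Fin p × ℤ)))
      (e.repr.symm ⟨A, hAmem⟩) := (hinj.hasSum_iff hzero').2 hHS
  have h2 : HasSum (fun n : ℤ => a (k, n) • e (l, n)) (e.repr.symm ⟨A, hAmem⟩) := by
    refine this.congr_fun ?_
    intro n
    simp [hAdef, Function.comp]
  exact h2.summable

theorem stmt5 {H : Type*} [NormedAddCommGroup H] [InnerProductSpace ℂ H]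
    [CompleteSpace H] [TopologicalSpace.SeparableSpace H]
    {p q : ℕ} (hp : 1 ≤ p) (hpq : p < q) (x y : Fin p × ℤ → H)
    (hxy : IsDualRieszBasisPair x y)
    (M : Matrix (Fin q) (Fin p) ℂ) (N : Matrix (Fin p) (Fin q) ℂ)
    (hNM : N * M = 1)
    (z zt : Fin q × ℤ → H)
    (hz : ∀ j n, z (j, n) = ∑ k, M j k • x (k, n))
    (hzt : ∀ j n, zt (j, n) = ∑ k, (starRingEnd ℂ) (N k j) • y (k, n)) :
    ∀ f : H, HasSum (fun jn : Fin q × ℤ => ⟪f, zt jn⟫ • z jn) f := by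
  classical
  obtain ⟨hxR, hyR, hbi, hsum⟩ := hxy
  obtain ⟨e, T, hxe⟩ := hxR
  obtain ⟨e', S, hye⟩ := hyR
  intro f
  set c : Fin p × ℤ → ℂ := fun i => ⟪f, y i⟫ with hcdef
  have hcl2 : Memℓp c 2 := by
    have hceq : c = fun i => (e'.repr ((ContinuousLinearMap.adjoint (S : H →L[ℂ] H)) f)) i := by
      funext i
      rw [hcdef]
      simp only [hye i]
      rw [HilbertBasis.repr_apply_apply, ContinuousLinearMap.adjoint_inner_right]
      simp
    rw [hceq]
    exact lp.memℓp _
  have hsumm : ∀ k l : Fin p, Summable (fun n : ℤ => c (k, n) • x (l, n)) := by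
    intro k l
    have h1 : Summable (fun n : ℤ => c (k, n) • e (l, n)) := aux_summable e c hcl2 k l
    have h2 := h1.hasSum.mapL (T : H →L[ℂ] H)
    refine h2.summable.congr ?_
    intro n
    simp [hxe]
  set t : Fin p → Fin p → H := fun k l => ∑' n : ℤ, c (k, n) • x (l, n) with htdef
  have ht : ∀ k l, HasSum (fun n : ℤ => c (k, n) • x (l, n)) (t k l) :=
    fun k l => (hsumm k l).hasSum
  have hdiag : HasSum (fun k : Fin p => t k k) f := by
    refine HasSum.prod_fiberwise (f := fun i : Fin p × ℤ => c i • x i) ?_ (fun k => ht k k)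
    exact hsum f
  have hfval : f = ∑ k : Fin p, t k k := (hdiag.unique (hasSum_fintype _))
  -- decomposition into product pieces
  set W := Fin p × Fin p × Fin q
  set P : W → (Fin q × ℤ) → H := fun w jn =>
    if jn.1 = w.2.2 then (N w.1 w.2.2 * M w.2.2 w.2.1 * c (w.1, jn.2)) • x (w.2.1, jn.2) else 0
    with hPdef
  have hPsum : ∀ w : W, HasSum (P w) ((N w.1 w.2.2 * M w.2.2 w.2.1) • t w.1 w.2.1) := by
    rintro ⟨k, l, j0⟩
    have hinj : Function.Injective (fun n : ℤ => ((j0, n) : Fin q × ℤ)) := by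
      intro m n h; simpa using congrArg Prod.snd h
    have hzero : ∀ i ∉ Set.range (fun n : ℤ => ((j0, n) : Fin q × ℤ)),
        P (k, l, j0) i = 0 := by
      intro i hi
      have : i.1 ≠ j0 := by intro h; exact hi ⟨i.2, by rw [← h]⟩
      simp [hPdef, this]
    refine (hinj.hasSum_iff hzero).1 ?_
    have := (ht k l).const_smul (N k j0 * M j0 l)
    have heq : (P (k, l, j0) ∘ fun n : ℤ => ((j0, n) : Fin q × ℤ))
        = fun n : ℤ => (N k j0 * M j0 l) • (c (k, n) • x (l, n)) := by
      funext n
      simp [hPdef, Function.comp, smul_smul]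
    rw [heq]
    exact this
  have hG : ∀ jn : Fin q × ℤ, ⟪f, zt jn⟫ • z jn = ∑ w : W, P w jn := by
    rintro ⟨j, n⟩
    have h1 : ⟪f, zt (j, n)⟫ = ∑ k : Fin p, N k j * c (k, n) := by
      rw [hzt]
      rw [sum_inner]
      congr 1; funext k
      rw [inner_smul_left]
      simp [hcdef]
    rw [h1, hz]
    rw [Finset.sum_smul]
    have h2 : ∀ k : Fin p, (N k j * c (k, n)) • ∑ l : Fin p, M j l • x (l, n)
        = ∑ l : Fin p, (N k j * M j l * c (k, n)) • x (l, n) := by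
      intro k
      rw [Finset.smul_sum]
      congr 1; funext l
      rw [smul_smul]
      ring_nf
    simp_rw [h2]
    rw [Fintype.sum_prod_type]
    congr 1; funext k
    rw [Fintype.sum_prod_type]
    congr 1; funext l
    simp only [hPdef]
    rw [Finset.sum_ite_eq Finset.univ j
      (fun j0 => (N k j0 * M j0 l * c (k, n)) • x (l, n))]
    simp
  have hTot := hasSum_sum (s := (Finset.univ : Finset W))
    (f := P) (a := fun w => (N w.1 w.2.2 * M w.2.2 w.2.1) • t w.1 w.2.1)
    (fun w _ => hPsum w)
  have hval : ∑ w : W, (N w.1 w.2.2 * M w.2.2 w.2.1) • t w.1 w.2.1 = f := by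
    rw [Fintype.sum_prod_type]
    have : ∀ k : Fin p, ∑ w : Fin p × Fin q, (N k w.2 * M w.2 w.1) • t k w.1 = t k k := by
      intro k
      rw [Fintype.sum_prod_type]
      have h3 : ∀ l : Fin p, ∑ j0 : Fin q, (N k j0 * M j0 l) • t k l
          = (if k = l then (1:ℂ) else 0) • t k l := by
        intro l
        rw [← Finset.sum_smul]
        congr 1
        rw [← Matrix.mul_apply, hNM, Matrix.one_apply]
      simp_rw [h3]
      simp [Finset.sum_ite_eq, ite_smul]
    simp_rw [this]
    exact hfval.symm
  rw [hval] at hTot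
  refine hTot.congr_fun ?_
  intro jn
  exact hG jn
end
end

section
/- Let H be a complex Hilbert space, let q > p ≥ 1, and let x, y : Fin p × ℤ → H be families such that: (i) there is B₁ > 0 with ∑_{(k,n)} |⟨f, x_{(k,n)}⟩|² ≤ B₁‖f‖² for every f ∈ H; (ii) there is B₂ > 0 with ∑_{(k,n)} |⟨f, y_{(k,n)}⟩|² ≤ B₂‖f‖² for every f ∈ H; and (iii) for every f ∈ H the family ((k,n) ↦ ⟨f, y_{(k,n)}⟩ x_{(k,n)}) has sum f. Let M be a q×p complex matrix and N a p×q complex matrix with N·M = I_p, and define z_{(j,n)} = ∑_{k=0}^{p−1} M_{j,k} x_{(k,n)} and z̃_{(j,n)} = ∑_{k=0}^{p−1} conj(N_{k,j}) y_{(k,n)}. Then for every f ∈ H the family ((j,n) ↦ ⟨f, z̃_{(j,n)}⟩ z_{(j,n)}) over Fin q × ℤ has sum f (unconditional convergence in H). -/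
/-! Expanding the coefficients,
`⟨f, z̃_{j,n}⟩ z_{j,n} = ∑_{k,l} N_{kj} M_{jl} ⟨f, y_{k,n}⟩ x_{l,n}`. Every cross series
`∑_n ⟨f, y_{k,n}⟩ x_{l,n}` converges: its coefficients are square-summable because `y` is Bessel,
and a Bessel family turns square-summable coefficients into a convergent series, the synthesis
operator being the adjoint of the bounded analysis operator. Summing over the finitely many `j`
first, `∑_j N_{kj} M_{jl} = δ_{kl}` leaves `∑_k ∑_n ⟨f, y_{k,n}⟩ x_{k,n} = f`. -/

noncomputable section
open scoped Classical

local notation "⟪" f ", " g "⟫" => @inner ℂ _ _ g f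

open Function

section Bessel

variable {ι H : Type*} [NormedAddCommGroup H] [InnerProductSpace ℂ H]

def IsBessel (v : ι → H) (B : ℝ) : Prop :=
  ∀ f : H, Summable (fun i => ‖⟪f, v i⟫‖ ^ 2) ∧ ∑' i, ‖⟪f, v i⟫‖ ^ 2 ≤ B * ‖f‖ ^ 2

namespace IsBessel

variable {v : ι → H} {B : ℝ}

lemma comp_injective (hv : IsBessel v B) {κ : Type*} {e : κ → ι} (he : Injective e) :
    IsBessel (v ∘ e) B := fun f =>
  ⟨(hv f).1.comp_injective he,
    (tsum_comp_le_tsum_of_inj (hv f).1 (fun _ => by positivity) he).trans (hv f).2⟩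

lemma memℓp (hv : IsBessel v B) (f : H) : Memℓp (fun i => ⟪f, v i⟫) 2 :=
  memℓp_gen (by simpa using (hv f).1)

def analysisOp (hv : IsBessel v B) : H →L[ℂ] lp (fun _ : ι => ℂ) 2 :=
  LinearMap.mkContinuous
    { toFun := fun f => ⟨fun i => ⟪f, v i⟫, hv.memℓp f⟩
      map_add' := fun f g => by ext; exact inner_add_right ..
      map_smul' := fun a f => by ext; exact inner_smul_right .. }
    (Real.sqrt B) fun f => by
      refine lp.norm_le_of_tsum_le (by simp) (by positivity) ?_
      simp only [ENNReal.toReal_ofNat, Real.rpow_two, mul_pow, Real.sq_sqrt']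
      exact (hv f).2.trans (by gcongr; exact le_max_left _ _)

lemma adjoint_analysisOp_single [CompleteSpace H] (hv : IsBessel v B) (i : ι) (a : ℂ) :
    ContinuousLinearMap.adjoint hv.analysisOp (lp.single 2 i a) = a • v i :=
  ext_inner_right ℂ fun g => by
    rw [ContinuousLinearMap.adjoint_inner_left, lp.inner_single_left, inner_smul_left]
    simp [analysisOp, mul_comm]

lemma summable_smul [CompleteSpace H] (hv : IsBessel v B) {c : ι → ℂ}
    (hc : Summable fun i => ‖c i‖ ^ 2) : Summable fun i => c i • v i := by
  let c' : lp (fun _ : ι => ℂ) 2 := ⟨c, memℓp_gen (by simpa using hc)⟩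
  have hsyn := (lp.hasSum_single ENNReal.ofNat_ne_top c').mapL
    (ContinuousLinearMap.adjoint hv.analysisOp)
  simp only [adjoint_analysisOp_single] at hsyn
  exact hsyn.summable

end IsBessel

end Bessel

lemma hasSum_prod_of_fiberwise {J α M : Type*} [Fintype J] [AddCommMonoid M] [TopologicalSpace M]
    [ContinuousAdd M] {g : J × α → M} {t : J → M} (h : ∀ j, HasSum (fun n => g (j, n)) (t j)) :
    HasSum g (∑ j, t j) := by
  have hslice (j : J) : HasSum (fun jn : J × α => if jn.1 = j then g jn else 0) (t j) := by
    refine ((Prod.mk_right_injective j).hasSum_iff ?_).mp (by simpa [comp_def] using h j)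
    rintro ⟨j', n⟩ hjn
    rw [if_neg]
    rintro rfl
    exact hjn ⟨n, rfl⟩
  simpa only [Finset.sum_ite_eq, Finset.mem_univ, if_true] using
    hasSum_sum (s := Finset.univ) fun j _ => hslice j

lemma HasSum.sum_smul_sum_smul {κ α R M : Type*} [Fintype κ] [CommSemiring R] [AddCommMonoid M]
    [Module R M] [TopologicalSpace M] [ContinuousAdd M] [ContinuousConstSMul R M]
    {b : κ → α → R} {x : κ → α → M} {u : κ → κ → M}
    (hu : ∀ k l, HasSum (fun n => b k n • x l n) (u k l)) (a c : κ → R) :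
    HasSum (fun n => (∑ k, a k * b k n) • ∑ l, c l • x l n) (∑ k, ∑ l, (a k * c l) • u k l) := by
  have hterm : (fun n => (∑ k, a k * b k n) • ∑ l, c l • x l n) =
      fun n => ∑ k, ∑ l, (a k * c l) • (b k n • x l n) := by
    ext n
    simp only [Finset.sum_smul_sum, smul_smul, mul_right_comm]
  rw [hterm]
  exact hasSum_sum fun k _ => hasSum_sum fun l _ => (hu k l).const_smul (a k * c l)

lemma Matrix.sum_sum_sum_mul_smul_of_mul_eq_one {m n R M : Type*} [Fintype m] [Fintype n]
    [DecidableEq n] [Semiring R] [AddCommMonoid M] [Module R M] {N : Matrix n m R}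
    {A : Matrix m n R} (h : N * A = 1) (u : n → n → M) :
    ∑ j, ∑ k, ∑ l, (N k j * A j l) • u k l = ∑ k, u k k := by
  calc ∑ j, ∑ k, ∑ l, (N k j * A j l) • u k l = ∑ k, ∑ l, (N * A) k l • u k l := by
        simp only [Matrix.mul_apply, Finset.sum_smul]
        rw [Finset.sum_comm]
        exact Finset.sum_congr rfl fun k _ => Finset.sum_comm
    _ = ∑ k, u k k := by simp [h, Matrix.one_apply, ite_smul]

theorem stmt6_general {H : Type*} [NormedAddCommGroup H] [InnerProductSpace ℂ H]
    [CompleteSpace H]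
    {p q : ℕ} (x y : Fin p × ℤ → H)
    (B₁ : ℝ)
    (hxBessel : ∀ f : H, Summable (fun i : Fin p × ℤ => ‖⟪f, x i⟫‖ ^ 2) ∧
      ∑' i : Fin p × ℤ, ‖⟪f, x i⟫‖ ^ 2 ≤ B₁ * ‖f‖ ^ 2)
    (B₂ : ℝ)
    (hyBessel : ∀ f : H, Summable (fun i : Fin p × ℤ => ‖⟪f, y i⟫‖ ^ 2) ∧
      ∑' i : Fin p × ℤ, ‖⟪f, y i⟫‖ ^ 2 ≤ B₂ * ‖f‖ ^ 2)
    (hrec : ∀ f : H, HasSum (fun i : Fin p × ℤ => ⟪f, y i⟫ • x i) f)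
    (M : Matrix (Fin q) (Fin p) ℂ) (N : Matrix (Fin p) (Fin q) ℂ)
    (hNM : N * M = 1)
    (z zt : Fin q × ℤ → H)
    (hz : ∀ j n, z (j, n) = ∑ k, M j k • x (k, n))
    (hzt : ∀ j n, zt (j, n) = ∑ k, (starRingEnd ℂ) (N k j) • y (k, n)) :
    ∀ f : H, HasSum (fun jn : Fin q × ℤ => ⟪f, zt jn⟫ • z jn) f := by
  intro f
  choose u hu using fun k l : Fin p =>
    IsBessel.summable_smul (IsBessel.comp_injective hxBessel (Prod.mk_right_injective l))
      ((hyBessel f).1.comp_injective (Prod.mk_right_injective k))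
  have hdiag : f = ∑ k, u k k :=
    ((hrec f).prod_fiberwise fun k => hu k k).unique (hasSum_fintype _)
  have hcoef (j : Fin q) (n : ℤ) : ⟪f, zt (j, n)⟫ = ∑ k, N k j * ⟪f, y (k, n)⟫ := by
    simp [hzt, mul_comm]
  have hfib (j : Fin q) : HasSum (fun n => ⟪f, zt (j, n)⟫ • z (j, n))
      (∑ k, ∑ l, (N k j * M j l) • u k l) := by
    simp only [hcoef, hz]
    exact HasSum.sum_smul_sum_smul hu (fun k => N k j) (M j)
  have htotal := hasSum_prod_of_fiberwise (g := fun jn => ⟪f, zt jn⟫ • z jn) hfib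
  rwa [Matrix.sum_sum_sum_mul_smul_of_mul_eq_one hNM, ← hdiag] at htotal

theorem stmt6 {H : Type*} [NormedAddCommGroup H] [InnerProductSpace ℂ H]
    [CompleteSpace H]
    {p q : ℕ} (hp : 1 ≤ p) (hpq : p < q) (x y : Fin p × ℤ → H)
    (B₁ : ℝ) (hB₁ : 0 < B₁)
    (hxBessel : ∀ f : H, Summable (fun i : Fin p × ℤ => ‖⟪f, x i⟫‖ ^ 2) ∧
      ∑' i : Fin p × ℤ, ‖⟪f, x i⟫‖ ^ 2 ≤ B₁ * ‖f‖ ^ 2)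
    (B₂ : ℝ) (hB₂ : 0 < B₂)
    (hyBessel : ∀ f : H, Summable (fun i : Fin p × ℤ => ‖⟪f, y i⟫‖ ^ 2) ∧
      ∑' i : Fin p × ℤ, ‖⟪f, y i⟫‖ ^ 2 ≤ B₂ * ‖f‖ ^ 2)
    (hrec : ∀ f : H, HasSum (fun i : Fin p × ℤ => ⟪f, y i⟫ • x i) f)
    (M : Matrix (Fin q) (Fin p) ℂ) (N : Matrix (Fin p) (Fin q) ℂ)
    (hNM : N * M = 1)
    (z zt : Fin q × ℤ → H)
    (hz : ∀ j n, z (j, n) = ∑ k, M j k • x (k, n))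
    (hzt : ∀ j n, zt (j, n) = ∑ k, (starRingEnd ℂ) (N k j) • y (k, n)) :
    ∀ f : H, HasSum (fun jn : Fin q × ℤ => ⟪f, zt jn⟫ • z jn) f :=
  stmt6_general x y B₁ hxBessel B₂ hyBessel hrec M N hNM z zt hz hzt
end
end

section
/- Let 𝕋 = ℝ/ℤ be the circle group (AddCircle 1) with its Haar probability measure, and for m ∈ ℤ let e_m ∈ L²(𝕋) denote the character e_m(x) = e^{2πimx}. Let K : 𝕋 → ℂ be measurable with 0 < essinf_{x} |K(x)| and esssup_{x} |K(x)| < ∞. Then: (i) the families (n ↦ e_{−n}·K) and (n ↦ e_{−n}/conj(K)) in L²(𝕋) are biorthogonal, i.e. ⟨e_{−n}·K, e_{−m}/conj(K)⟩ = δ_{n,m} for all n, m ∈ ℤ; and (ii) for every F ∈ L²(𝕋), the family (n ↦ ⟨F, e_{−n}·K⟩ · (e_{−n}/conj(K))) over n ∈ ℤ has sum F in L²(𝕋). -/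
/-!
Multiplication by `conj K` and by `1 / conj K` are mutually inverse bounded operators on `L²(𝕋)`,
because `|K|` is essentially bounded above and away from `0`. Since `conj(e_{-n} K) · (e_{-m} / conj K)`
equals `conj(e_{-n}) · e_{-m}`, biorthogonality is the orthonormality of the characters, and
`⟪F, e_{-n} K⟫` is the `(-n)`-th Fourier coefficient of `G = conj K · F`. Applying the bounded operator
`1 / conj K` to the Fourier expansion of `G` gives the expansion of `F`.
-/

noncomputable section
open MeasureTheory AddCircle
open scoped ComplexConjugate ENNReal

local notation "⟪" f ", " g "⟫" => @inner ℂ _ _ g f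

local notation "𝕋" => AddCircle (1 : ℝ)
local notation "μ" => @haarAddCircle (1 : ℝ) _

namespace MeasureTheory

variable {α : Type*} [MeasurableSpace α] {ν : Measure α}

theorem memLp_top_of_essSup_lt_top {E : Type*} [NormedAddCommGroup E] {f : α → E}
    (hf : AEStronglyMeasurable f ν) (h : essSup (fun t => (‖f t‖₊ : ℝ≥0∞)) ν < ⊤) :
    MemLp f ∞ ν :=
  ⟨hf, by rwa [eLpNorm_exponent_top]⟩

theorem ae_ne_zero_of_pos_essInf {E : Type*} [NormedAddCommGroup E] {f : α → E}
    (h : 0 < essInf (fun t => (‖f t‖₊ : ℝ≥0∞)) ν) : ∀ᵐ t ∂ν, f t ≠ 0 := by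
  filter_upwards [ae_essInf_le (f := fun t => (‖f t‖₊ : ℝ≥0∞))] with t ht hft
  exact (h.trans_le ht).ne' (by simp [hft])

theorem memLp_top_inv_of_pos_essInf {𝕜 : Type*} [RCLike 𝕜] {f : α → 𝕜}
    (hf : AEMeasurable f ν) (h : 0 < essInf (fun t => (‖f t‖₊ : ℝ≥0∞)) ν) :
    MemLp (fun t => (f t)⁻¹) ∞ ν := by
  refine ⟨hf.inv.aestronglyMeasurable, ?_⟩
  rw [eLpNorm_exponent_top]
  refine (eLpNormEssSup_le_of_ae_enorm_bound ?_).trans_lt (ENNReal.inv_lt_top.mpr h)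
  filter_upwards [ae_essInf_le (f := fun t => (‖f t‖₊ : ℝ≥0∞)), ae_ne_zero_of_pos_essInf h]
    with t ht hft
  rw [enorm_inv hft]
  exact ENNReal.inv_le_inv.mpr ht

namespace Lp

variable {𝕜 : Type*} [RCLike 𝕜] {p : ℝ≥0∞} [Fact (1 ≤ p)]

def mulL (φ : Lp 𝕜 ∞ ν) : Lp 𝕜 p ν →L[𝕜] Lp 𝕜 p ν :=
  (ContinuousLinearMap.mul 𝕜 𝕜).holderL ν ∞ p p φ

theorem coeFn_mulL (φ : Lp 𝕜 ∞ ν) (F : Lp 𝕜 p ν) :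
    (mulL φ F : α → 𝕜) =ᵐ[ν] fun t => φ t * F t :=
  ContinuousLinearMap.coeFn_holder _ _ _

theorem mulL_eq_of_ae_eq {φ : Lp 𝕜 ∞ ν} {F G : Lp 𝕜 p ν} (h : ∀ᵐ t ∂ν, φ t * F t = G t) :
    mulL φ F = G :=
  Lp.ext <| (coeFn_mulL φ F).trans h

end Lp

theorem L2.inner_congr_ae {𝕜 : Type*} [RCLike 𝕜] {f₁ g₁ f₂ g₂ : Lp 𝕜 2 ν}
    (h : ∀ᵐ t ∂ν, g₁ t * conj (f₁ t) = g₂ t * conj (f₂ t)) :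
    inner 𝕜 f₁ g₁ = inner 𝕜 f₂ g₂ := by
  simp only [L2.inner_def, RCLike.inner_apply]
  exact integral_congr_ae h

end MeasureTheory

theorem HilbertBasis.hasSum_repr_smul_of_leftInverse {ι 𝕜 E : Type*} [RCLike 𝕜]
    [NormedAddCommGroup E] [InnerProductSpace 𝕜 E] (b : HilbertBasis ι 𝕜 E) {M D : E →L[𝕜] E}
    (hDM : ∀ x, D (M x) = x) (x : E) : HasSum (fun i => b.repr (M x) i • D (b i)) x := by
  simpa only [hDM, map_smul] using D.hasSum (b.hasSum_repr (M x))

section Circle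

variable {K : 𝕋 → ℂ} {xK yK : ℤ → Lp ℂ 2 μ}

theorem inner_fourier_mul_fourier_div_conj (hKne : ∀ᵐ t ∂μ, K t ≠ 0)
    (hxK : ∀ n : ℤ, (xK n : 𝕋 → ℂ) =ᵐ[μ] fun t => fourier (-n) t * K t)
    (hyK : ∀ n : ℤ, (yK n : 𝕋 → ℂ) =ᵐ[μ] fun t => fourier (-n) t / conj (K t)) (n m : ℤ) :
    ⟪xK n, yK m⟫ = if n = m then (1 : ℂ) else 0 :=
  calc ⟪xK n, yK m⟫ = inner ℂ (fourierLp 2 (-m) : Lp ℂ 2 μ) (fourierLp 2 (-n)) := by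
        refine L2.inner_congr_ae ?_
        filter_upwards [hxK n, hyK m, coeFn_fourierLp 2 (-n), coeFn_fourierLp 2 (-m), hKne]
          with t h₁ h₂ h₃ h₄ hKt
        rw [h₁, h₂, h₃, h₄, map_div₀, Complex.conj_conj]
        field_simp
    _ = if n = m then 1 else 0 := by
        simp [orthonormal_iff_ite.mp orthonormal_fourier, eq_comm]

theorem hasSum_inner_fourier_mul_smul_fourier_div_conj (hK : AEMeasurable K μ)
    (hK0 : 0 < essInf (fun t : 𝕋 => (‖K t‖₊ : ℝ≥0∞)) μ)
    (hKtop : essSup (fun t : 𝕋 => (‖K t‖₊ : ℝ≥0∞)) μ < ⊤)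
    (hxK : ∀ n : ℤ, (xK n : 𝕋 → ℂ) =ᵐ[μ] fun t => fourier (-n) t * K t)
    (hyK : ∀ n : ℤ, (yK n : 𝕋 → ℂ) =ᵐ[μ] fun t => fourier (-n) t / conj (K t))
    (F : Lp ℂ 2 μ) : HasSum (fun n : ℤ => ⟪F, xK n⟫ • yK n) F := by
  have hφ : MemLp (fun t => conj (K t)) ∞ μ :=
    (memLp_top_of_essSup_lt_top hK.aestronglyMeasurable hKtop).star
  have hψ : MemLp (fun t => conj (K t)⁻¹) ∞ μ :=
    (memLp_top_inv_of_pos_essInf hK hK0).star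
  set M : Lp ℂ 2 μ →L[ℂ] Lp ℂ 2 μ := Lp.mulL (hφ.toLp _)
  set D : Lp ℂ 2 μ →L[ℂ] Lp ℂ 2 μ := Lp.mulL (hψ.toLp _)
  have hDM (G : Lp ℂ 2 μ) : D (M G) = G := by
    refine Lp.mulL_eq_of_ae_eq ?_
    filter_upwards [Lp.coeFn_mulL (hφ.toLp _) G, hψ.coeFn_toLp, hφ.coeFn_toLp,
      ae_ne_zero_of_pos_essInf hK0] with t h₁ h₂ h₃ hKt
    rw [h₁, h₂, h₃]
    simp [hKt]
  have hD_fourier (n : ℤ) : D (fourierLp 2 (-n)) = yK n := by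
    refine Lp.mulL_eq_of_ae_eq ?_
    filter_upwards [hψ.coeFn_toLp, coeFn_fourierLp 2 (-n), hyK n] with t h₁ h₂ h₃
    rw [h₁, h₂, h₃, div_eq_mul_inv, mul_comm, map_inv₀]
  have hrepr (n : ℤ) : fourierBasis.repr (M F) (-n) = ⟪F, xK n⟫ := by
    rw [HilbertBasis.repr_apply_apply, coe_fourierBasis]
    refine L2.inner_congr_ae ?_
    filter_upwards [Lp.coeFn_mulL (hφ.toLp _) F, hφ.coeFn_toLp, coeFn_fourierLp 2 (-n), hxK n]
      with t h₁ h₂ h₃ h₄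
    rw [h₁, h₂, h₃, h₄, map_mul]
    ring
  convert (Equiv.neg ℤ).hasSum_iff.mpr (fourierBasis.hasSum_repr_smul_of_leftInverse hDM F)
    using 1
  funext n
  simp only [Function.comp_apply, Equiv.neg_apply, coe_fourierBasis, hD_fourier, hrepr]

end Circle

theorem stmt9 (K : 𝕋 → ℂ) (hK : Measurable K)
    (hK0 : 0 < essInf (fun t : 𝕋 => (‖K t‖₊ : ℝ≥0∞)) μ)
    (hKtop : essSup (fun t : 𝕋 => (‖K t‖₊ : ℝ≥0∞)) μ < ⊤)
    (xK yK : ℤ → Lp ℂ 2 μ)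
    (hxK : ∀ n : ℤ, (xK n : 𝕋 → ℂ) =ᵐ[μ] fun t => fourier (-n) t * K t)
    (hyK : ∀ n : ℤ, (yK n : 𝕋 → ℂ) =ᵐ[μ] fun t => fourier (-n) t / conj (K t)) :
    (∀ n m : ℤ, ⟪xK n, yK m⟫ = if n = m then (1 : ℂ) else 0) ∧
      ∀ F : Lp ℂ 2 μ, HasSum (fun n : ℤ => ⟪F, xK n⟫ • yK n) F := by
  exact ⟨inner_fourier_mul_fourier_div_conj (ae_ne_zero_of_pos_essInf hK0) hxK hyK,
    hasSum_inner_fourier_mul_smul_fourier_div_conj hK.aemeasurable hK0 hKtop hxK hyK⟩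
end
end
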